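/- arXiv:2410.22442 — 3 statements merged into one kernel-verified Lean document; each statement's English description precedes it below -/
import Mathlib

section
/- The sets A and B are open subsets of R^n, they are disjoint, and their union is R^n \ {0⃗}; that is, A and B form a partition of R^n \ {0⃗} into two open sets. -/
/-!
A convex subring `V` contains `(-1, 1)`, so as an additive subgroup it is open, hence also
closed. Off the hyperplane `s = 0`, membership in `A` only depends on the continuous ratio
`xₙ² / s(x)`, which makes `A` the preimage of the open set `V`, and `B ∩ {s > 0}` the preimage
of the open set `R \ V`. The points of `B` with `s = 0` are covered by the open cone
`{ |b| s(x) < xₙ² }` for any `b ∉ V`: on it the ratio exceeds `|b|`, so it cannot lie in `V`.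
-/

noncomputable section

/-- `sSum m x = x₁² + ⋯ + x_{n-1}²` (the sum of squares of all but the last coordinate). -/
def sSum {R : Type*} [Field R] [LinearOrder R] [IsStrictOrderedRing R] (m : ℕ) (x : Fin (m + 2) → R) : R :=
  ∑ i : Fin (m + 1), x i.castSucc ^ 2

/-- `A = { x ≠ 0 : xₙ² = a·(x₁² + ⋯ + x_{n-1}²) for some a ∈ V }`. -/
def setA {R : Type*} [Field R] [LinearOrder R] [IsStrictOrderedRing R] (V : Subring R) (m : ℕ) :
    Set (Fin (m + 2) → R) :=
  {x | x ≠ 0 ∧ ∃ a ∈ V, x (Fin.last (m + 1)) ^ 2 = a * sSum m x}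

/-- `B = (R^n \ {0}) \ A`. -/
def setB {R : Type*} [Field R] [LinearOrder R] [IsStrictOrderedRing R] (V : Subring R) (m : ℕ) :
    Set (Fin (m + 2) → R) :=
  {x | x ≠ 0} \ setA V m

/-- `h(x₁,…,xₙ) = (x₁,…,x_{n-1}, ε·xₙ)`. -/
def hMap {R : Type*} [Field R] [LinearOrder R] [IsStrictOrderedRing R] (ε : R) (m : ℕ) (x : Fin (m + 2) → R) :
    Fin (m + 2) → R :=
  Function.update x (Fin.last (m + 1)) (ε * x (Fin.last (m + 1)))

/-- `f(0) = 0`, `f = id` on `A`, `f = h` on `B`. -/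
def fMap {R : Type*} [Field R] [LinearOrder R] [IsStrictOrderedRing R] (V : Subring R) (ε : R) (m : ℕ)
    (x : Fin (m + 2) → R) : Fin (m + 2) → R := by
  classical
  exact if x = 0 then 0 else if x ∈ setA V m then x else hMap ε m x

end

section OrderedField

variable {R : Type*} [Field R] [LinearOrder R] [IsStrictOrderedRing R]

/-- `xₙ² / s(x)`, with the junk value `0` where `s(x) = 0`. -/
def lastRatio (m : ℕ) (x : Fin (m + 2) → R) : R :=
  x (Fin.last (m + 1)) ^ 2 / sSum m x

variable {m : ℕ}

lemma sSum_nonneg (x : Fin (m + 2) → R) : 0 ≤ sSum m x :=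
  Finset.sum_nonneg fun _ _ => sq_nonneg _

lemma lastRatio_nonneg (x : Fin (m + 2) → R) : 0 ≤ lastRatio m x :=
  div_nonneg (sq_nonneg _) (sSum_nonneg x)

lemma eq_zero_of_sSum_eq_zero {x : Fin (m + 2) → R} (hs : sSum m x = 0)
    (hlast : x (Fin.last (m + 1)) = 0) : x = 0 := by
  have hsq := (Finset.sum_eq_zero_iff_of_nonneg fun i _ => sq_nonneg (x i.castSucc)).1 hs
  funext i
  induction i using Fin.lastCases with
  | last => exact hlast
  | cast j => exact pow_eq_zero_iff two_ne_zero |>.1 (hsq j (Finset.mem_univ j))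

lemma ne_zero_of_sSum_pos {x : Fin (m + 2) → R} (hs : 0 < sSum m x) : x ≠ 0 := by
  rintro rfl
  simp [sSum] at hs

variable (V : Subring R)

lemma sSum_pos_of_mem_setA {x : Fin (m + 2) → R} (hx : x ∈ setA V m) : 0 < sSum m x := by
  obtain ⟨hx0, a, -, hxa⟩ := hx
  refine (sSum_nonneg x).lt_of_ne' fun hs => hx0 (eq_zero_of_sSum_eq_zero hs ?_)
  rw [hs, mul_zero] at hxa
  exact pow_eq_zero_iff two_ne_zero |>.1 hxa

lemma mem_setA_iff_of_sSum_pos {x : Fin (m + 2) → R} (hs : 0 < sSum m x) :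
    x ∈ setA V m ↔ lastRatio m x ∈ V := by
  constructor
  · rintro ⟨-, a, haV, hxa⟩
    rwa [lastRatio, hxa, mul_div_cancel_right₀ a hs.ne']
  · intro hr
    exact ⟨ne_zero_of_sSum_pos hs, lastRatio m x, hr, (div_mul_cancel₀ _ hs.ne').symm⟩

lemma setA_eq : setA V m = {x | 0 < sSum m x} ∩ lastRatio m ⁻¹' V := by
  ext x
  exact ⟨fun hx => ⟨sSum_pos_of_mem_setA V hx, (mem_setA_iff_of_sSum_pos V
    (sSum_pos_of_mem_setA V hx)).1 hx⟩, fun ⟨hs, hr⟩ => (mem_setA_iff_of_sSum_pos V hs).2 hr⟩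

variable {V}

lemma mem_setB_of_abs_mul_sSum_lt (hV : ∀ x y : R, y ∈ V → |x| ≤ |y| → x ∈ V) {b : R}
    (hb : b ∉ V) {x : Fin (m + 2) → R} (hx : |b| * sSum m x < x (Fin.last (m + 1)) ^ 2) :
    x ∈ setB V m := by
  have hlast : x (Fin.last (m + 1)) ≠ 0 := by
    rintro hl
    rw [hl, zero_pow two_ne_zero] at hx
    exact (mul_nonneg (abs_nonneg b) (sSum_nonneg x)).not_gt hx
  refine ⟨fun hx0 => hlast (by simp [hx0]), fun hA => hb ?_⟩
  have hs := sSum_pos_of_mem_setA V hA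
  have hbr : |b| < lastRatio m x := (lt_div_iff₀ hs).2 hx
  refine hV b (lastRatio m x) ((mem_setA_iff_of_sSum_pos V hs).1 hA) ?_
  rw [abs_of_nonneg (lastRatio_nonneg x)]
  exact hbr.le

lemma setB_eq_union (hV : ∀ x y : R, y ∈ V → |x| ≤ |y| → x ∈ V) {b : R} (hb : b ∉ V) :
    setB V m = ({x | 0 < sSum m x} ∩ lastRatio m ⁻¹' (V : Set R)ᶜ) ∪
      {x | |b| * sSum m x < x (Fin.last (m + 1)) ^ 2} := by
  ext x
  refine ⟨fun ⟨hx0, hxA⟩ => ?_, ?_⟩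
  · rcases (sSum_nonneg x).lt_or_eq with hs | hs
    · exact Or.inl ⟨hs, fun hr => hxA ((mem_setA_iff_of_sSum_pos V hs).2 hr)⟩
    · have hlast : x (Fin.last (m + 1)) ≠ 0 := fun hl => hx0 (eq_zero_of_sSum_eq_zero hs.symm hl)
      exact Or.inr (by show _ < _; rw [← hs, mul_zero]; positivity)
  · rintro (⟨hs, hr⟩ | hx)
    · exact ⟨ne_zero_of_sSum_pos hs, fun hA => hr ((mem_setA_iff_of_sSum_pos V hs).1 hA)⟩
    · exact mem_setB_of_abs_mul_sSum_lt hV hb hx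

end OrderedField

section OrderTopology

variable {R : Type*} [Field R] [LinearOrder R] [IsStrictOrderedRing R]
  [TopologicalSpace R] [OrderTopology R] {V : Subring R}

lemma Subring.isOpen_of_abs_le_mem (hV : ∀ x y : R, y ∈ V → |x| ≤ |y| → x ∈ V) :
    IsOpen (V : Set R) := by
  refine V.toAddSubgroup.isOpen_of_mem_nhds (g := 0) (Filter.mem_of_superset
    (Ioo_mem_nhds (neg_lt_zero.2 one_pos) one_pos) fun x hx => hV x 1 V.one_mem ?_)
  rw [abs_one]
  exact (abs_lt.2 hx).le

variable {m : ℕ}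

lemma continuous_sSum : Continuous (sSum m : (Fin (m + 2) → R) → R) :=
  continuous_finsetSum _ fun _ _ => (continuous_apply _).pow 2

lemma continuousOn_lastRatio : ContinuousOn (lastRatio m : (Fin (m + 2) → R) → R)
    {x | 0 < sSum m x} :=
  ((continuous_apply _).pow 2).continuousOn.div continuous_sSum.continuousOn fun _ hx => hx.ne'

lemma isOpen_setA (hV : ∀ x y : R, y ∈ V → |x| ≤ |y| → x ∈ V) : IsOpen (setA V m) := by
  rw [setA_eq]
  exact continuousOn_lastRatio.isOpen_inter_preimage (isOpen_lt continuous_const continuous_sSum)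
    (Subring.isOpen_of_abs_le_mem hV)

lemma isOpen_setB (hV : ∀ x y : R, y ∈ V → |x| ≤ |y| → x ∈ V) {b : R} (hb : b ∉ V) :
    IsOpen (setB V m) := by
  have hVc : IsOpen (V : Set R)ᶜ :=
    (V.toAddSubgroup.isClosed_of_isOpen (Subring.isOpen_of_abs_le_mem hV)).isOpen_compl
  rw [setB_eq_union hV hb]
  exact (continuousOn_lastRatio.isOpen_inter_preimage
    (isOpen_lt continuous_const continuous_sSum) hVc).union
    (isOpen_lt (continuous_const.mul continuous_sSum) ((continuous_apply _).pow 2))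

end OrderTopology

theorem statement_2_general {R : Type*} [Field R] [LinearOrder R] [IsStrictOrderedRing R] [TopologicalSpace R] [OrderTopology R]
    (V : Subring R) (hV : ∀ x y : R, y ∈ V → |x| ≤ |y| → x ∈ V)
    (ε : R) (hεinv : ε⁻¹ ∉ V) (m : ℕ) :
    IsOpen (setA V m) ∧ IsOpen (setB V m) ∧ Disjoint (setA V m) (setB V m) ∧
      setA V m ∪ setB V m = {x : Fin (m + 2) → R | x ≠ 0} :=
  ⟨isOpen_setA hV, isOpen_setB hV hεinv, Set.disjoint_sdiff_right,
    Set.union_sdiff_cancel fun _ hx => hx.1⟩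

/-- `A` and `B` are disjoint open sets whose union is `R^n \ {0}`. -/
theorem statement_2 {R : Type*} [Field R] [LinearOrder R] [IsStrictOrderedRing R] [TopologicalSpace R] [OrderTopology R]
    (V : Subring R) (hV : ∀ x y : R, y ∈ V → |x| ≤ |y| → x ∈ V)
    (ε : R) (hε0 : 0 < ε) (hεV : ε ∈ V) (hεinv : ε⁻¹ ∉ V) (m : ℕ) :
    IsOpen (setA V m) ∧ IsOpen (setB V m) ∧ Disjoint (setA V m) (setB V m) ∧
      setA V m ∪ setB V m = {x : Fin (m + 2) → R | x ≠ 0} :=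
  statement_2_general V hV ε hεinv m
end

section
/- For every neighborhood U of 0⃗ in R^n there exist points a ∈ A ∩ U and b ∈ B ∩ U with h(b) = a. -/
/-!
Both `A` and `B` are invariant under multiplication by nonzero scalars, and `h` is linear, so
it suffices to find one point `b ∈ B` with `h b ∈ A` and to scale the pair into `U`. The point
`b = (ε, 0, …, 0, 1)` works: `h b = (ε, 0, …, 0, ε)` lies in `A` with coefficient `1`, while
`1 = a·ε²` would give `ε⁻¹ = a·ε ∈ V`.
-/

section Cone

variable {R : Type*} [Field R] [LinearOrder R] [IsStrictOrderedRing R] {m : ℕ}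

lemma sSum_smul (t : R) (x : Fin (m + 2) → R) : sSum m (t • x) = t ^ 2 * sSum m x := by
  simp [sSum, mul_pow, Finset.mul_sum]

lemma hMap_smul (ε t : R) (x : Fin (m + 2) → R) : hMap ε m (t • x) = t • hMap ε m x := by
  rw [hMap, hMap, ← Function.update_smul, Pi.smul_apply, smul_eq_mul, smul_eq_mul,
    mul_left_comm]

lemma smul_mem_setA_iff (V : Subring R) {t : R} (ht : t ≠ 0) {x : Fin (m + 2) → R} :
    t • x ∈ setA V m ↔ x ∈ setA V m := by
  simp only [setA, Set.mem_ofPred_eq, smul_ne_zero_iff_right ht, Pi.smul_apply, smul_eq_mul,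
    sSum_smul, mul_pow, mul_left_comm _ (t ^ 2), mul_right_inj' (pow_ne_zero 2 ht)]

lemma smul_mem_setB_iff (V : Subring R) {t : R} (ht : t ≠ 0) {x : Fin (m + 2) → R} :
    t • x ∈ setB V m ↔ x ∈ setB V m := by
  simp only [setB, Set.mem_sdiff, Set.mem_ofPred_eq, smul_ne_zero_iff_right ht,
    smul_mem_setA_iff V ht]

end Cone

lemma exists_ne_zero_smul_mem_nhds_zero {R E : Type*} [Semiring R] [TopologicalSpace R]
    [(nhdsWithin (0 : R) {0}ᶜ).NeBot] [AddCommMonoid E] [Module R E] [TopologicalSpace E]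
    [ContinuousSMul R E] (x y : E) {U : Set E} (hU : U ∈ nhds 0) :
    ∃ t : R, t ≠ 0 ∧ t • x ∈ U ∧ t • y ∈ U := by
  have tendsto_smul (z : E) : Filter.Tendsto (fun t : R => t • z) (nhdsWithin 0 {0}ᶜ) (nhds 0) := by
    simpa using ((Filter.tendsto_id (x := nhds (0 : R))).smul_const z).mono_left nhdsWithin_le_nhds
  obtain ⟨t, ⟨hx, hy⟩, ht⟩ :=
    (((tendsto_smul x).eventually_mem hU).and ((tendsto_smul y).eventually_mem hU)).and
      self_mem_nhdsWithin |>.exists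
  exact ⟨t, ht, hx, hy⟩

section Witness

variable {R : Type*} [Field R] [LinearOrder R] [IsStrictOrderedRing R] {m : ℕ}

lemma sSum_snoc (y : Fin (m + 1) → R) (c : R) :
    sSum m (Fin.snoc y c : Fin (m + 2) → R) = ∑ i, y i ^ 2 := by
  simp only [sSum, Fin.snoc_castSucc]

lemma hMap_snoc (ε : R) (y : Fin (m + 1) → R) (c : R) :
    hMap ε m (Fin.snoc y c) = Fin.snoc y (ε * c) := by
  rw [hMap, Fin.snoc_last, Fin.update_snoc_last]

lemma sSum_snoc_single (ε c : R) :
    sSum m (Fin.snoc (Pi.single 0 ε) c : Fin (m + 2) → R) = ε ^ 2 := by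
  rw [sSum_snoc, Finset.sum_eq_single_of_mem 0 (Finset.mem_univ _)]
  · rw [Pi.single_eq_same]
  · intro i _ hi
    rw [Pi.single_eq_of_ne hi, zero_pow two_ne_zero]

lemma snoc_single_mem_setA (V : Subring R) {ε : R} (hε : ε ≠ 0) :
    (Fin.snoc (Pi.single 0 ε) ε : Fin (m + 2) → R) ∈ setA V m := by
  refine ⟨fun h => hε ?_, 1, V.one_mem, ?_⟩
  · simpa using congrFun h (Fin.last (m + 1))
  · rw [sSum_snoc_single, Fin.snoc_last, one_mul]

lemma snoc_single_mem_setB (V : Subring R) {ε : R} (hεV : ε ∈ V) (hεinv : ε⁻¹ ∉ V) :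
    (Fin.snoc (Pi.single 0 ε) 1 : Fin (m + 2) → R) ∈ setB V m := by
  refine ⟨fun h => one_ne_zero (α := R) (by simpa using congrFun h (Fin.last (m + 1))), ?_⟩
  rintro ⟨-, a, haV, ha⟩
  rw [sSum_snoc_single, Fin.snoc_last, one_pow] at ha
  have hε : ε ≠ 0 := by rintro rfl; simp at ha
  apply hεinv
  convert V.mul_mem haV hεV using 1
  field_simp
  linear_combination ha

end Witness

theorem statement_4_general {R : Type*} [Field R] [LinearOrder R] [IsStrictOrderedRing R] [TopologicalSpace R] [OrderTopology R]
    (V : Subring R)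
    (ε : R) (hεV : ε ∈ V) (hεinv : ε⁻¹ ∉ V) (m : ℕ) :
    ∀ U ∈ nhds (0 : Fin (m + 2) → R),
      ∃ a ∈ setA V m ∩ U, ∃ b ∈ setB V m ∩ U, hMap ε m b = a := by
  intro U hU
  have hε : ε ≠ 0 := by rintro rfl; simp at hεinv
  set b : Fin (m + 2) → R := Fin.snoc (Pi.single 0 ε) 1
  have hb : b ∈ setB V m := snoc_single_mem_setB V hεV hεinv
  have hhb : hMap ε m b ∈ setA V m := by
    rw [hMap_snoc, mul_one]
    exact snoc_single_mem_setA V hε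
  obtain ⟨t, ht, htb, hthb⟩ := exists_ne_zero_smul_mem_nhds_zero (R := R) b (hMap ε m b) hU
  exact ⟨t • hMap ε m b, ⟨(smul_mem_setA_iff V ht).2 hhb, hthb⟩,
    t • b, ⟨(smul_mem_setB_iff V ht).2 hb, htb⟩, hMap_smul ε t b⟩

/-- every neighborhood `U` of `0` contains points `a ∈ A`, `b ∈ B` with
`h(b) = a`. -/
theorem statement_4 {R : Type*} [Field R] [LinearOrder R] [IsStrictOrderedRing R] [TopologicalSpace R] [OrderTopology R]
    (V : Subring R) (hV : ∀ x y : R, y ∈ V → |x| ≤ |y| → x ∈ V)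
    (ε : R) (hε0 : 0 < ε) (hεV : ε ∈ V) (hεinv : ε⁻¹ ∉ V) (m : ℕ) :
    ∀ U ∈ nhds (0 : Fin (m + 2) → R),
      ∃ a ∈ setA V m ∩ U, ∃ b ∈ setB V m ∩ U, hMap ε m b = a :=
  statement_4_general V ε hεV hεinv m
end

section
/- The map f is locally injective at every point other than the origin: for every x ∈ R^n with x ≠ 0⃗ there is an open neighborhood of x on which f is injective. -/
/-!
Every `y` satisfies `f y = y` or `f y = h y`. If `xₙ = 0`, some other coordinate `xᵢ` is nonzero,
and the open set `{|yₙ| < |yᵢ|}` around `x` lies in `A`, where `f` is the identity.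
If `xₙ ≠ 0`, then `ε < 1` lets us pick `r` with `ε r < |xₙ| < r`; the shell `{ε r < |yₙ| < r}`
is disjoint from its image under `h`, so on it `f` cannot identify a point of `A` with one of `B`,
while `id` and `h` are both injective.
-/

open Set

theorem Set.injOn_of_eq_self_or_eq {α : Type*} {f g : α → α} {U : Set α}
    (hg : Function.Injective g) (hf : ∀ y ∈ U, f y = y ∨ f y = g y)
    (hU : ∀ a ∈ U, ∀ b ∈ U, a ≠ g b) : InjOn f U := by
  intro a ha b hb hab
  rcases hf a ha with hfa | hfa <;> rcases hf b hb with hfb | hfb <;> rw [hfa, hfb] at hab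
  · exact hab
  · exact absurd hab (hU a ha b hb)
  · exact absurd hab.symm (hU b hb a ha)
  · exact hg hab

theorem Fin.exists_castSucc_ne_zero {M : Type*} [Zero M] {k : ℕ} {x : Fin (k + 1) → M}
    (hx : x ≠ 0) (hlast : x (Fin.last k) = 0) : ∃ i : Fin k, x i.castSucc ≠ 0 := by
  by_contra! h
  exact hx (funext fun j => Fin.lastCases hlast h j)

section

variable {R : Type*} [Field R] [LinearOrder R] [IsStrictOrderedRing R] {V : Subring R} {ε : R}
  {m : ℕ}

theorem lt_one_of_inv_notMem (hV : ∀ a : R, |a| ≤ 1 → a ∈ V) (hε : 0 < ε) (hεinv : ε⁻¹ ∉ V) :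
    ε < 1 := by
  by_contra! h
  exact hεinv (hV _ (by rw [abs_of_pos (inv_pos.mpr hε)]; exact inv_le_one_of_one_le₀ h))

theorem sq_le_sSum (y : Fin (m + 2) → R) (i : Fin (m + 1)) : y i.castSucc ^ 2 ≤ sSum m y :=
  Finset.single_le_sum (f := fun j : Fin (m + 1) => y j.castSucc ^ 2)
    (fun _ _ => sq_nonneg _) (Finset.mem_univ i)

theorem mem_setA_of_abs_lt (hV : ∀ a : R, |a| ≤ 1 → a ∈ V) {y : Fin (m + 2) → R}
    {i : Fin (m + 1)} (hy : |y (Fin.last (m + 1))| < |y i.castSucc|) : y ∈ setA V m := by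
  have hyi : 0 < |y i.castSucc| := (abs_nonneg _).trans_lt hy
  have hsq : y (Fin.last (m + 1)) ^ 2 < y i.castSucc ^ 2 := sq_lt_sq.mpr hy
  have hs : 0 < sSum m y := (pow_pos hyi 2).trans_le ((sq_abs _).trans_le (sq_le_sSum y i))
  refine ⟨fun h => hyi.ne' (by simp [h]), y (Fin.last (m + 1)) ^ 2 / sSum m y, hV _ ?_,
    (div_mul_cancel₀ _ hs.ne').symm⟩
  rw [abs_of_nonneg (by positivity), div_le_one hs]
  exact hsq.le.trans (sq_le_sSum y i)

theorem fMap_of_mem_setA {y : Fin (m + 2) → R} (hy : y ∈ setA V m) : fMap V ε m y = y := by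
  simp [fMap, hy.1, hy]

theorem fMap_eq_self_or_eq_hMap (y : Fin (m + 2) → R) :
    fMap V ε m y = y ∨ fMap V ε m y = hMap ε m y := by
  unfold fMap
  split_ifs with h0
  · exact Or.inl h0.symm
  · exact Or.inl rfl
  · exact Or.inr rfl

theorem hMap_injective (hε : ε ≠ 0) : Function.Injective (hMap ε m) := by
  intro a b hab
  funext i
  have hi := congrFun hab i
  by_cases h : i = Fin.last (m + 1)
  · subst h
    simp only [hMap, Function.update_self] at hi
    exact mul_left_cancel₀ hε hi
  · simpa [hMap, Function.update_of_ne h] using hi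

theorem hMap_ne_of_mem_shell {r : R} (hε : 0 < ε) {a b : Fin (m + 2) → R}
    (ha : |a (Fin.last (m + 1))| ∈ Ioo (ε * r) r) (hb : |b (Fin.last (m + 1))| ∈ Ioo (ε * r) r) :
    a ≠ hMap ε m b := by
  rintro rfl
  simp only [hMap, Function.update_self, abs_mul, abs_of_pos hε] at ha
  exact (mul_lt_mul_of_pos_left hb.2 hε).not_gt ha.1

end

theorem statement_7_general {R : Type*} [Field R] [LinearOrder R] [IsStrictOrderedRing R] [TopologicalSpace R] [OrderTopology R]
    (V : Subring R) (hV : ∀ x y : R, y ∈ V → |x| ≤ |y| → x ∈ V)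
    (ε : R) (hε0 : 0 < ε) (hεinv : ε⁻¹ ∉ V) (m : ℕ) :
    ∀ x : Fin (m + 2) → R, x ≠ 0 →
      ∃ U : Set (Fin (m + 2) → R), IsOpen U ∧ x ∈ U ∧ Set.InjOn (fMap V ε m) U := by
  intro x hx
  have hV1 : ∀ a : R, |a| ≤ 1 → a ∈ V := fun a ha => hV a 1 V.one_mem (by rwa [abs_one])
  set n := Fin.last (m + 1)
  by_cases hxn : x n = 0
  · obtain ⟨i, hi⟩ := Fin.exists_castSucc_ne_zero hx hxn
    refine ⟨{y | |y n| < |y i.castSucc|}, isOpen_lt (by fun_prop) (by fun_prop),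
      by simpa [hxn] using hi, ?_⟩
    exact injOn_id _ |>.congr fun y hy => (fMap_of_mem_setA (mem_setA_of_abs_lt hV1 hy)).symm
  · have hε1 : ε < 1 := lt_one_of_inv_notMem hV1 hε0 hεinv
    have hxn' : 0 < |x n| := abs_pos.mpr hxn
    obtain ⟨r, hxr, hrx⟩ := exists_between (lt_div_iff₀ hε0 |>.mpr
      (mul_lt_of_lt_one_right hxn' hε1))
    refine ⟨{y | |y n| ∈ Ioo (ε * r) r}, isOpen_Ioo.preimage (by fun_prop),
      ⟨by rwa [mul_comm, ← lt_div_iff₀ hε0], hxr⟩, ?_⟩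
    exact injOn_of_eq_self_or_eq (hMap_injective hε0.ne') (fun y _ => fMap_eq_self_or_eq_hMap y)
      fun a ha b hb => hMap_ne_of_mem_shell hε0 ha hb

/-- `f` is locally injective at every point other than the origin. -/
theorem statement_7 {R : Type*} [Field R] [LinearOrder R] [IsStrictOrderedRing R] [TopologicalSpace R] [OrderTopology R]
    (V : Subring R) (hV : ∀ x y : R, y ∈ V → |x| ≤ |y| → x ∈ V)
    (ε : R) (hε0 : 0 < ε) (hεV : ε ∈ V) (hεinv : ε⁻¹ ∉ V) (m : ℕ) :
    ∀ x : Fin (m + 2) → R, x ≠ 0 →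
      ∃ U : Set (Fin (m + 2) → R), IsOpen U ∧ x ∈ U ∧ Set.InjOn (fMap V ε m) U :=
  statement_7_general V hV ε hε0 hεinv m
end
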